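/- Let n ≥ 2 and k ≥ 2 be integers. The function ε ↦ d(k+ε, k, n) is strictly decreasing on (0,1], and for every ε ∈ (0,1) one has d(k+ε, k, n) > 2k³ − k² − nk + n − 1. Moreover, for n ∈ {2,3,4} the lower bound 2k³ − k² − nk + n − 1 is positive. -/
import Mathlib


/-- The coefficient `d(ξ,k,n) = 2ξ(1−ξ)(k−1)/(k−ξ) − k(k+n−2) + n − 1` from the second
domain variation of the Robin energy at the ball. -/
noncomputable def dCoeff (ξ : ℝ) (k n : ℕ) : ℝ :=
  2 * ξ * (1 - ξ) * ((k : ℝ) - 1) / ((k : ℝ) - ξ) - (k : ℝ) * ((k : ℝ) + (n : ℝ) - 2) +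
    (n : ℝ) - 1

theorem dCoeff_strictAnti_and_lower_bound (n k : ℕ) (hn : 2 ≤ n) (hk : 2 ≤ k) :
    StrictAntiOn (fun ε : ℝ => dCoeff ((k : ℝ) + ε) k n) (Set.Ioc 0 1) ∧
    (∀ ε ∈ Set.Ioo (0 : ℝ) 1,
      2 * (k : ℝ) ^ 3 - (k : ℝ) ^ 2 - (n : ℝ) * (k : ℝ) + (n : ℝ) - 1 <
        dCoeff ((k : ℝ) + ε) k n) ∧
    (n = 2 ∨ n = 3 ∨ n = 4 →
      0 < 2 * (k : ℝ) ^ 3 - (k : ℝ) ^ 2 - (n : ℝ) * (k : ℝ) + (n : ℝ) - 1) := by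
  have hk2 : (2 : ℝ) ≤ (k : ℝ) := by exact_mod_cast hk
  have hn2 : (2 : ℝ) ≤ (n : ℝ) := by exact_mod_cast hn
  have ex : ∀ t : ℝ, 0 < t → dCoeff ((k : ℝ) + t) k n =
      2 * ((k : ℝ) - 1) * ((k : ℝ) + t) * ((k : ℝ) + t - 1) / t +
        ((n : ℝ) - 1 - (k : ℝ) * ((k : ℝ) + (n : ℝ) - 2)) := by
    intro t ht
    unfold dCoeff
    have h : (k : ℝ) - ((k : ℝ) + t) = -t := by ring
    rw [h]
    field_simp [ht.ne']
    ring
  have anti : StrictAntiOn (fun ε : ℝ => dCoeff ((k : ℝ) + ε) k n) (Set.Ioc 0 1) := by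
    intro x hx y hy hxy
    simp only
    rw [ex x hx.1, ex y hy.1]
    have hx0 := hx.1
    have hy0 := hy.1
    have h1 : 2 * ((k : ℝ) - 1) * ((k : ℝ) + y) * ((k : ℝ) + y - 1) / y <
        2 * ((k : ℝ) - 1) * ((k : ℝ) + x) * ((k : ℝ) + x - 1) / x := by
      rw [div_lt_div_iff₀ hy0 hx0]
      have hxy1 : x * y ≤ 1 := by nlinarith [hx.2, hy.2, hx0, hy0]
      have key : 0 < (k : ℝ) * (k : ℝ) - (k : ℝ) - x * y := by nlinarith
      nlinarith [mul_pos (mul_pos (show (0:ℝ) < 2 * ((k : ℝ) - 1) by linarith)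
        (sub_pos.2 hxy)) key]
    linarith
  refine ⟨anti, ?_, ?_⟩
  · intro ε hε
    have h1 : dCoeff ((k : ℝ) + 1) k n < dCoeff ((k : ℝ) + ε) k n := by
      have := anti ⟨hε.1, hε.2.le⟩ (by constructor <;> norm_num) hε.2
      simpa using this
    have h2 : dCoeff ((k : ℝ) + 1) k n =
        2 * (k : ℝ) ^ 3 - (k : ℝ) ^ 2 - (n : ℝ) * (k : ℝ) + (n : ℝ) - 1 := by
      rw [ex 1 one_pos]; ring
    linarith
  · rintro (rfl | rfl | rfl) <;> push_cast <;> nlinarith [hk2, sq_nonneg ((k : ℝ) - 1)]
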